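/- Let α > 0 and σ_α = 32π²(1+α/4). For every β > 1, with v_ε = u_ε/‖Δu_ε‖₂ the normalized Moser-type sequence, ∫_B |x|^α e^{β σ_α v_ε²} dx → +∞ as ε → 0⁺. Consequently, sup{ ∫_B |x|^α e^{σ u²} dx : u ∈ H²_{N,rad}(B), ‖Δu‖₂ = 1 } = +∞ whenever σ > σ_α. -/
import Mathlib


open MeasureTheory Filter

noncomputable def ω₃ : ℝ := 2 * Real.pi ^ 2

/-- The Moser-type sequence on the unit ball `B ⊂ ℝ⁴` (radial profile). -/
noncomputable def moserSeq (ε : ℝ) (r : ℝ) : ℝ :=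
  (1 / Real.sqrt ω₃) *
    (if r ≤ ε ^ ((1:ℝ)/4) then
      Real.sqrt (-Real.log ε / 4) +
        (Real.sqrt ε - r ^ 2) / (2 * Real.sqrt (ε * (-Real.log ε)))
    else (-Real.log r) / Real.sqrt (-Real.log ε))

/-- Normalized Moser sequence `v_ε = u_ε / ‖Δu_ε‖₂`, using `‖Δu_ε‖₂² = 1 + 4/|log ε|`. -/
noncomputable def moserSeqNorm (ε : ℝ) (r : ℝ) : ℝ :=
  moserSeq ε r / Real.sqrt (1 + 4 / (-Real.log ε))

/-- The weighted exponential functional in polar coordinates: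
`∫_B |x|^α e^{σ v²} dx = ω₃ ∫_0^1 e^{σ v(r)²} r^{α+3} dr`. -/
noncomputable def weightedExpFunctional (α σ : ℝ) (v : ℝ → ℝ) : ℝ :=
  ω₃ * ∫ r in Set.Ioo (0:ℝ) 1, Real.exp (σ * (v r) ^ 2) * r ^ (α + 3)

lemma omega_pos : (0:ℝ) < ω₃ := by
  unfold ω₃; positivity

lemma omega_one_le : (1:ℝ) ≤ ω₃ := by
  unfold ω₃; nlinarith [Real.pi_gt_three]

/-- Lower bound for the normalized Moser sequence on the inner region. -/
noncomputable def mLow (ε : ℝ) : ℝ :=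
  Real.sqrt ((-Real.log ε / 4) / (ω₃ * (1 + 4 / (-Real.log ε))))


lemma sqrtL_ge_two {ε : ℝ} (hL4 : 4 ≤ -Real.log ε) : 2 ≤ Real.sqrt (-Real.log ε) := by
  rw [show (2:ℝ) = Real.sqrt 4 by
    rw [show (4:ℝ) = 2 ^ 2 by norm_num, Real.sqrt_sq (by norm_num : (0:ℝ) ≤ 2)]]
  exact Real.sqrt_le_sqrt hL4

lemma log_bound {ε : ℝ} (hε0 : 0 < ε) (hε4 : ε < Real.exp (-4)) : 4 ≤ -Real.log ε := by
  have := Real.log_lt_log hε0 hε4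
  rw [Real.log_exp] at this
  linarith

lemma eps_lt_one {ε : ℝ} (hε4 : ε < Real.exp (-4)) : ε < 1 :=
  lt_trans hε4 (by
    rw [Real.exp_lt_one_iff]
    norm_num)

lemma c_sq {ε : ℝ} (hε0 : 0 < ε) : (ε ^ ((1:ℝ)/4)) ^ 2 = Real.sqrt ε := by
  rw [← Real.rpow_natCast (ε ^ ((1:ℝ)/4)) 2, ← Real.rpow_mul hε0.le, Real.sqrt_eq_rpow]
  norm_num

lemma normalizer_ge_one {ε : ℝ} (hL0 : 0 < -Real.log ε) :
    1 ≤ Real.sqrt (1 + 4 / (-Real.log ε)) := by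
  rw [show (1:ℝ) = Real.sqrt 1 by simp]
  apply Real.sqrt_le_sqrt
  have : 0 ≤ 4 / (-Real.log ε) := by positivity
  simp only [Real.sqrt_one]
  linarith

/-- Upper and lower (nonnegativity) bound for the normalized Moser sequence on `(0,1)`. -/
lemma moserSeqNorm_bounds {ε : ℝ} (hε0 : 0 < ε) (hε4 : ε < Real.exp (-4)) {r : ℝ}
    (hr0 : 0 < r) (hr1 : r < 1) :
    0 ≤ moserSeqNorm ε r ∧
      moserSeqNorm ε r ≤ Real.sqrt (-Real.log ε / 4) + 1 + (-Real.log ε) := by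
  have hω := omega_pos
  have hω1 := omega_one_le
  have hL4 : 4 ≤ -Real.log ε := log_bound hε0 hε4
  have hL0 : (0:ℝ) < -Real.log ε := by linarith
  have hε1 : ε < 1 := eps_lt_one hε4
  have hsL2 : 2 ≤ Real.sqrt (-Real.log ε) := sqrtL_ge_two hL4
  have hD1 : 1 ≤ Real.sqrt (1 + 4 / (-Real.log ε)) := normalizer_ge_one hL0
  have hsw1 : 1 ≤ Real.sqrt ω₃ := by
    rw [show (1:ℝ) = Real.sqrt 1 by simp]
    exact Real.sqrt_le_sqrt hω1
  set t : ℝ := (if r ≤ ε ^ ((1:ℝ)/4) then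
      Real.sqrt (-Real.log ε / 4) +
        (Real.sqrt ε - r ^ 2) / (2 * Real.sqrt (ε * (-Real.log ε)))
    else (-Real.log r) / Real.sqrt (-Real.log ε)) with htdef
  have ht : 0 ≤ t ∧ t ≤ Real.sqrt (-Real.log ε / 4) + 1 + (-Real.log ε) := by
    rw [htdef]
    by_cases h : r ≤ ε ^ ((1:ℝ)/4)
    · rw [if_pos h]
      have hr2 : r ^ 2 ≤ Real.sqrt ε := by
        calc r ^ 2 ≤ (ε ^ ((1:ℝ)/4)) ^ 2 := by
              apply pow_le_pow_left₀ hr0.le h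
          _ = Real.sqrt ε := c_sq hε0
      have hprod : 0 < ε * (-Real.log ε) := mul_pos hε0 hL0
      have hsden : 0 < Real.sqrt (ε * (-Real.log ε)) := Real.sqrt_pos.mpr hprod
      have hsmul : Real.sqrt (ε * (-Real.log ε)) = Real.sqrt ε * Real.sqrt (-Real.log ε) :=
        Real.sqrt_mul hε0.le _
      have hse : 0 ≤ Real.sqrt ε := Real.sqrt_nonneg ε
      have hX1 : (Real.sqrt ε - r ^ 2) / (2 * Real.sqrt (ε * (-Real.log ε))) ≤ 1 := by
        rw [div_le_one (by linarith)]
        rw [hsmul]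
        nlinarith [sq_nonneg r]
      have hX0 : 0 ≤ (Real.sqrt ε - r ^ 2) / (2 * Real.sqrt (ε * (-Real.log ε))) :=
        div_nonneg (by linarith) (by linarith)
      constructor
      · have := Real.sqrt_nonneg (-Real.log ε / 4)
        linarith
      · linarith
    · rw [if_neg h]
      push_neg at h
      have hεc : ε ≤ ε ^ ((1:ℝ)/4) := by
        calc ε = ε ^ (1:ℝ) := (Real.rpow_one ε).symm
          _ ≤ ε ^ ((1:ℝ)/4) := Real.rpow_le_rpow_of_exponent_ge hε0 hε1.le (by norm_num)
      have hlogr : Real.log r < 0 := Real.log_neg hr0 hr1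
      have hεr : ε < r := lt_of_le_of_lt hεc h
      have hlogεr : Real.log ε < Real.log r := Real.log_lt_log hε0 hεr
      have h2 : -Real.log r ≤ -Real.log ε := by linarith
      have hsL1 : 1 ≤ Real.sqrt (-Real.log ε) := by linarith
      constructor
      · exact div_nonneg (by linarith) (by linarith)
      · have := div_le_self (by linarith : (0:ℝ) ≤ -Real.log r) hsL1
        have := Real.sqrt_nonneg (-Real.log ε / 4)
        linarith
  have hms : 0 ≤ moserSeq ε r ∧
      moserSeq ε r ≤ Real.sqrt (-Real.log ε / 4) + 1 + (-Real.log ε) := by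
    unfold moserSeq
    rw [← htdef]
    constructor
    · exact mul_nonneg (by positivity) ht.1
    · calc (1 / Real.sqrt ω₃) * t ≤ 1 * t := by
            apply mul_le_mul_of_nonneg_right _ ht.1
            rw [div_le_one (by linarith)]
            linarith
        _ = t := one_mul t
        _ ≤ _ := ht.2
  unfold moserSeqNorm
  constructor
  · exact div_nonneg hms.1 (by linarith)
  · calc moserSeq ε r / Real.sqrt (1 + 4 / (-Real.log ε)) ≤ moserSeq ε r :=
        div_le_self hms.1 hD1
      _ ≤ _ := hms.2

/-- Lower bound for the normalized Moser sequence on the inner region. -/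
lemma moserSeqNorm_ge {ε : ℝ} (hε0 : 0 < ε) (hε4 : ε < Real.exp (-4)) {r : ℝ}
    (hr0 : 0 < r) (hrc : r ≤ ε ^ ((1:ℝ)/4)) : mLow ε ≤ moserSeqNorm ε r := by
  have hω := omega_pos
  have hL4 : 4 ≤ -Real.log ε := log_bound hε0 hε4
  have hL0 : (0:ℝ) < -Real.log ε := by linarith
  have hD1 : 1 ≤ Real.sqrt (1 + 4 / (-Real.log ε)) := normalizer_ge_one hL0
  have hD0 : 0 < Real.sqrt (1 + 4 / (-Real.log ε)) := by linarith
  have hsw0 : 0 < Real.sqrt ω₃ := Real.sqrt_pos.mpr hω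
  have hr2 : r ^ 2 ≤ Real.sqrt ε := by
    calc r ^ 2 ≤ (ε ^ ((1:ℝ)/4)) ^ 2 := pow_le_pow_left₀ hr0.le hrc 2
      _ = Real.sqrt ε := c_sq hε0
  have hprod : 0 < ε * (-Real.log ε) := mul_pos hε0 hL0
  have hsden : 0 < Real.sqrt (ε * (-Real.log ε)) := Real.sqrt_pos.mpr hprod
  have hX0 : 0 ≤ (Real.sqrt ε - r ^ 2) / (2 * Real.sqrt (ε * (-Real.log ε))) :=
    div_nonneg (by linarith) (by linarith)
  have hmexp : mLow ε =
      (Real.sqrt (-Real.log ε / 4) / Real.sqrt ω₃) / Real.sqrt (1 + 4 / (-Real.log ε)) := by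
    unfold mLow
    rw [Real.sqrt_div (by positivity) _, Real.sqrt_mul hω.le, ← div_div]
  have hmoser : Real.sqrt (-Real.log ε / 4) / Real.sqrt ω₃ ≤ moserSeq ε r := by
    unfold moserSeq
    rw [if_pos hrc]
    rw [div_eq_inv_mul, ← one_div]
    apply mul_le_mul_of_nonneg_left _ (by positivity)
    linarith
  unfold moserSeqNorm
  rw [hmexp]
  exact (div_le_div_iff_of_pos_right hD0).mpr hmoser

lemma moser_main_ineq (α σ : ℝ) (hα : 0 < α) (hσ : 0 < σ) {ε : ℝ}
    (hε0 : 0 < ε) (hε4 : ε < Real.exp (-4)) :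
    ω₃ / (α + 4) * Real.exp (σ * mLow ε ^ 2 + Real.log ε * ((α + 4) / 4))
      ≤ weightedExpFunctional α σ (moserSeqNorm ε) := by
  have hω := omega_pos
  have hL4 : 4 ≤ -Real.log ε := log_bound hε0 hε4
  have hL0 : (0:ℝ) < -Real.log ε := by linarith
  have hε1 : ε < 1 := eps_lt_one hε4
  set c : ℝ := ε ^ ((1:ℝ)/4) with hcdef
  have hc0 : 0 < c := Real.rpow_pos_of_pos hε0 _
  have hc1 : c < 1 := Real.rpow_lt_one hε0.le hε1 (by norm_num)
  set f : ℝ → ℝ := fun r => Real.exp (σ * moserSeqNorm ε r ^ 2) * r ^ (α + 3) with hfdef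
  -- measurability
  have mv : Measurable (moserSeqNorm ε) := by
    unfold moserSeqNorm moserSeq
    apply Measurable.div_const
    apply Measurable.const_mul
    exact Measurable.ite (measurableSet_Iic)
      (measurable_const.add ((measurable_const.sub
        ((measurable_id.pow_const 2))).div_const _))
      ((Real.measurable_log.neg).div_const _)
  have mh : Measurable f :=
    (((mv.pow_const 2).const_mul σ).exp).mul (measurable_id.pow_const (α + 3))
  -- integrability on (0,1)
  have hint : IntegrableOn f (Set.Ioo (0:ℝ) 1) := by
    apply Measure.integrableOn_of_bounded
      (M := Real.exp (σ * (Real.sqrt (-Real.log ε / 4) + 1 + (-Real.log ε)) ^ 2))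
      measure_Ioo_lt_top.ne mh.aestronglyMeasurable
    rw [ae_restrict_iff' measurableSet_Ioo]
    apply ae_of_all
    intro r hr
    obtain ⟨h0r, hr1⟩ := hr
    obtain ⟨hv0, hvB⟩ := moserSeqNorm_bounds hε0 hε4 h0r hr1
    have hr3 : r ^ (α + 3) ≤ 1 := Real.rpow_le_one h0r.le hr1.le (by linarith)
    have hr3' : (0:ℝ) ≤ r ^ (α + 3) := by positivity
    have hnorm : ‖f r‖ = f r := Real.norm_of_nonneg (by rw [hfdef]; positivity)
    rw [hnorm, hfdef]
    calc Real.exp (σ * moserSeqNorm ε r ^ 2) * r ^ (α + 3)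
        ≤ Real.exp (σ * (Real.sqrt (-Real.log ε / 4) + 1 + (-Real.log ε)) ^ 2) * 1 := by
          apply mul_le_mul _ hr3 hr3' (Real.exp_pos _).le
          exact Real.exp_le_exp.mpr
            (mul_le_mul_of_nonneg_left (pow_le_pow_left₀ hv0 hvB 2) hσ.le)
      _ = _ := mul_one _
  have hsub : Set.Ioo (0:ℝ) c ⊆ Set.Ioo (0:ℝ) 1 := Set.Ioo_subset_Ioo_right hc1.le
  -- step 1: restrict integral
  have step1 : (∫ r in Set.Ioo (0:ℝ) c, f r) ≤ ∫ r in Set.Ioo (0:ℝ) 1, f r := by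
    apply setIntegral_mono_set hint _ (HasSubset.Subset.eventuallyLE hsub)
    rw [EventuallyLE, ae_restrict_iff' measurableSet_Ioo]
    apply ae_of_all
    intro r hr
    have h0r : 0 < r := hr.1
    rw [hfdef]
    positivity
  -- step 2: pointwise lower bound on inner region
  have hg_int : IntegrableOn (fun r : ℝ => Real.exp (σ * mLow ε ^ 2) * r ^ (α + 3))
      (Set.Ioo (0:ℝ) c) := by
    apply Integrable.const_mul
    have h := intervalIntegral.intervalIntegrable_rpow'
      (show (-1:ℝ) < α + 3 by linarith) (a := 0) (b := c)
    rw [intervalIntegrable_iff_integrableOn_Ioc_of_le hc0.le] at h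
    exact h.mono_set Set.Ioo_subset_Ioc_self
  have step2 : (∫ r in Set.Ioo (0:ℝ) c, Real.exp (σ * mLow ε ^ 2) * r ^ (α + 3))
      ≤ ∫ r in Set.Ioo (0:ℝ) c, f r := by
    apply setIntegral_mono_on hg_int (hint.mono_set hsub) measurableSet_Ioo
    intro r hr
    have hlow := moserSeqNorm_ge hε0 hε4 hr.1 (le_of_lt hr.2)
    have hml0 : 0 ≤ mLow ε := Real.sqrt_nonneg _
    rw [hfdef]
    have h0r : 0 < r := hr.1
    apply mul_le_mul_of_nonneg_right _ (by positivity)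
    exact Real.exp_le_exp.mpr
      (mul_le_mul_of_nonneg_left (pow_le_pow_left₀ hml0 hlow 2) hσ.le)
  -- step 3: compute the inner integral
  have hIc : (∫ r in Set.Ioo (0:ℝ) c, r ^ (α + 3)) = c ^ (α + 4) / (α + 4) := by
    rw [← integral_Ioc_eq_integral_Ioo, ← intervalIntegral.integral_of_le hc0.le,
      integral_rpow (Or.inl (by linarith : (-1:ℝ) < α + 3)),
      Real.zero_rpow (by linarith : α + 3 + 1 ≠ 0),
      show α + 3 + 1 = α + 4 by ring, sub_zero]
  have step3 : (∫ r in Set.Ioo (0:ℝ) c, Real.exp (σ * mLow ε ^ 2) * r ^ (α + 3))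
      = Real.exp (σ * mLow ε ^ 2) * (c ^ (α + 4) / (α + 4)) := by
    rw [integral_const_mul, hIc]
  -- exponential identity
  have hc4 : c ^ (α + 4) = Real.exp (Real.log ε * ((α + 4) / 4)) := by
    rw [hcdef, ← Real.rpow_mul hε0.le, Real.rpow_def_of_pos hε0,
      show (1:ℝ)/4 * (α + 4) = (α + 4) / 4 by ring]
  calc ω₃ / (α + 4) * Real.exp (σ * mLow ε ^ 2 + Real.log ε * ((α + 4) / 4))
      = ω₃ * (Real.exp (σ * mLow ε ^ 2) * (c ^ (α + 4) / (α + 4))) := by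
        rw [hc4, Real.exp_add]; ring
    _ ≤ ω₃ * ∫ r in Set.Ioo (0:ℝ) 1, f r := by
        apply mul_le_mul_of_nonneg_left _ hω.le
        rw [← step3]
        exact le_trans step2 step1
    _ = weightedExpFunctional α σ (moserSeqNorm ε) := rfl

lemma moser_key (α : ℝ) (hα : 0 < α) {σ : ℝ} (hσ : 4 * ω₃ * (α + 4) ≤ σ) :
    Tendsto (fun ε => weightedExpFunctional α σ (moserSeqNorm ε))
      (nhdsWithin 0 (Set.Ioo 0 1)) atTop := by
  have hω := omega_pos
  have hσ0 : 0 < σ := lt_of_lt_of_le (by nlinarith) hσ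
  -- -log ε → ∞
  have hlog : Tendsto Real.log (nhdsWithin (0:ℝ) (Set.Ioo 0 1)) atBot :=
    Real.tendsto_log_nhdsGT_zero.mono_left
      (nhdsWithin_mono 0 Set.Ioo_subset_Ioi_self)
  have hL : Tendsto (fun ε : ℝ => -Real.log ε) (nhdsWithin 0 (Set.Ioo 0 1)) atTop := by
    rw [← tendsto_neg_atBot_iff]
    simpa using hlog
  have hEv : ∀ᶠ ε in nhdsWithin (0:ℝ) (Set.Ioo 0 1), 0 < ε ∧ ε < Real.exp (-4) := by
    have h2 : ∀ᶠ ε in nhdsWithin (0:ℝ) (Set.Ioo 0 1), ε < Real.exp (-4) :=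
      eventually_nhdsWithin_of_eventually_nhds (eventually_lt_nhds (Real.exp_pos _))
    filter_upwards [eventually_mem_nhdsWithin, h2] with ε h1 h2'
    exact ⟨h1.1, h2'⟩
  have hEvL : ∀ᶠ ε in nhdsWithin (0:ℝ) (Set.Ioo 0 1),
      0 < ε ∧ ε < Real.exp (-4) ∧ 4 ≤ -Real.log ε := by
    filter_upwards [hEv] with ε hε
    refine ⟨hε.1, hε.2, ?_⟩
    have := Real.log_lt_log hε.1 hε.2
    rw [Real.log_exp] at this
    linarith
  -- exponent tends to infinity
  have hE : Tendsto (fun ε => σ * mLow ε ^ 2 + Real.log ε * ((α + 4) / 4))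
      (nhdsWithin (0:ℝ) (Set.Ioo 0 1)) atTop := by
    apply tendsto_atTop_mono' _ ?_ (hL.const_mul_atTop (show (0:ℝ) < (α+4)/4 by linarith))
    filter_upwards [hEvL] with ε hε
    obtain ⟨hε0, hε4, hL4⟩ := hε
    set L := -Real.log ε with hLdef
    have hL0 : 0 < L := by linarith
    have hm2 : mLow ε ^ 2 = (L / 4) / (ω₃ * (1 + 4 / L)) := by
      unfold mLow
      rw [← hLdef]
      exact Real.sq_sqrt (by positivity)
    have hlogε : Real.log ε = -L := by rw [hLdef]; ring
    clear_value L
    rw [hm2, hlogε]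
    have h14 : 1 + 4 / L = (L + 4) / L := by field_simp
    have key : (L / 4) / (ω₃ * ((L + 4) / L)) = L ^ 2 / (4 * (ω₃ * (L + 4))) := by
      field_simp
    rw [h14, key, ← mul_div_assoc]
    have h2 : (α + 4) / 4 * L + L * ((α + 4) / 4) ≤ σ * L ^ 2 / (4 * (ω₃ * (L + 4))) := by
      rw [le_div_iff₀ (by positivity)]
      have h1 : 0 ≤ (σ - 4 * ω₃ * (α + 4)) * L ^ 2 :=
        mul_nonneg (by linarith) (sq_nonneg L)
      have h2 : 0 ≤ ω₃ * (α + 4) * L * (L - 4) :=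
        mul_nonneg (mul_nonneg (mul_nonneg hω.le (by linarith)) (by linarith)) (by linarith)
      nlinarith [h1, h2]
    linarith
  have hG : Tendsto (fun ε => ω₃ / (α + 4) *
      Real.exp (σ * mLow ε ^ 2 + Real.log ε * ((α + 4) / 4)))
      (nhdsWithin (0:ℝ) (Set.Ioo 0 1)) atTop :=
    (Real.tendsto_exp_atTop.comp hE).const_mul_atTop (by positivity)
  apply tendsto_atTop_mono' _ ?_ hG
  filter_upwards [hEv] with ε hε
  exact moser_main_ineq α σ hα hσ0 hε.1 hε.2

/-- Sharpness of `σ_α = 32π²(1+α/4)`: for every `β > 1` the functional with exponent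
`β σ_α` blows up along the normalized Moser sequence as `ε → 0⁺`; consequently, for
every `σ > σ_α` the supremum of the functional over the radial unit sphere of
`H²_N(B)` is `+∞`. -/
theorem moser_sequence_blowup (α : ℝ) (hα : 0 < α) :
    (∀ β > (1:ℝ),
      Tendsto (fun ε => weightedExpFunctional α
          (β * (32 * Real.pi ^ 2 * (1 + α / 4))) (moserSeqNorm ε))
        (nhdsWithin 0 (Set.Ioo 0 1)) atTop) ∧
    (∀ σ, σ > 32 * Real.pi ^ 2 * (1 + α / 4) →
      Tendsto (fun ε => weightedExpFunctional α σ (moserSeqNorm ε))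
        (nhdsWithin 0 (Set.Ioo 0 1)) atTop) := by
  have hconv : 32 * Real.pi ^ 2 * (1 + α / 4) = 4 * ω₃ * (α + 4) := by
    unfold ω₃; ring
  have hpos : 0 < 4 * ω₃ * (α + 4) := by
    have := omega_pos; nlinarith
  constructor
  · intro β hβ
    apply moser_key α hα
    rw [hconv]
    nlinarith
  · intro σ hσ
    apply moser_key α hα
    rw [hconv] at hσ
    exact hσ.le
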